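/- arXiv:2110.13122 — 3 statements merged into one kernel-verified Lean document; each statement's English description precedes it below -/
import Mathlib

section
/- If X is a locally ccc Hausdorff space, then |X| ≤ (wL(X)·πχ(X))^(ψ_c(X)·t(X)). -/
open Cardinal Set

universe u

section Defs
variable (X : Type u) [TopologicalSpace X]

/-- An open cover of the whole space. -/
def IsOpenCover (𝒰 : Set (Set X)) : Prop := (∀ U ∈ 𝒰, IsOpen U) ∧ ⋃₀ 𝒰 = Set.univ

/-- The cellularity: supremum of cardinalities of pairwise disjoint families of nonempty
open sets, plus `ℵ₀`. -/
noncomputable def cellularity : Cardinal.{u} :=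
  max ℵ₀ (⨆ 𝒰 : {𝒰 : Set (Set X) // (∀ U ∈ 𝒰, IsOpen U ∧ U.Nonempty) ∧
    𝒰.PairwiseDisjoint id}, #𝒰.1)

/-- The weak Lindelöf degree. -/
noncomputable def wLdeg : Cardinal.{u} :=
  sInf {κ | ℵ₀ ≤ κ ∧ ∀ 𝒰 : Set (Set X), IsOpenCover X 𝒰 →
    ∃ 𝒱 ⊆ 𝒰, #𝒱 ≤ κ ∧ Dense (⋃₀ 𝒱)}

/-- The tightness. -/
noncomputable def tightness : Cardinal.{u} :=
  sInf {κ | ℵ₀ ≤ κ ∧ ∀ (A : Set X) (x : X), x ∈ closure A →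
    ∃ B ⊆ A, #B ≤ κ ∧ x ∈ closure B}

/-- The π-character. -/
noncomputable def piCharacter : Cardinal.{u} :=
  sInf {κ | ℵ₀ ≤ κ ∧ ∀ x : X, ∃ 𝒬 : Set (Set X), #𝒬 ≤ κ ∧
    (∀ P ∈ 𝒬, IsOpen P ∧ P.Nonempty) ∧
    ∀ U : Set X, IsOpen U → x ∈ U → ∃ P ∈ 𝒬, P ⊆ U}

/-- The pseudocharacter. -/
noncomputable def pseudoChar : Cardinal.{u} :=
  sInf {κ | ℵ₀ ≤ κ ∧ ∀ x : X, ∃ 𝒱 : Set (Set X), #𝒱 ≤ κ ∧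
    (∀ V ∈ 𝒱, IsOpen V ∧ x ∈ V) ∧ ⋂₀ 𝒱 = {x}}

/-- The closed pseudocharacter. -/
noncomputable def closedPseudoChar : Cardinal.{u} :=
  sInf {κ | ℵ₀ ≤ κ ∧ ∀ x : X, ∃ 𝒱 : Set (Set X), #𝒱 ≤ κ ∧
    (∀ V ∈ 𝒱, IsOpen V ∧ x ∈ V) ∧ (⋂ V ∈ 𝒱, closure V) = {x}}

/-- The density. -/
noncomputable def densityCard : Cardinal.{u} :=
  sInf {κ | ℵ₀ ≤ κ ∧ ∃ D : Set X, #D ≤ κ ∧ Dense D}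

/-- The star of a set `A` with respect to a family `𝒰`. -/
def st (A : Set X) (𝒰 : Set (Set X)) : Set X := ⋃₀ {U | U ∈ 𝒰 ∧ (A ∩ U).Nonempty}

/-- The θ-closure of a set. -/
def thetaClosure (A : Set X) : Set X :=
  {x | ∀ U : Set X, IsOpen U → x ∈ U → (closure U ∩ A).Nonempty}

/-- The θ-density. -/
noncomputable def thetaDensityCard : Cardinal.{u} :=
  sInf {κ | ℵ₀ ≤ κ ∧ ∃ D : Set X, #D ≤ κ ∧ thetaClosure X D = Set.univ}

/-- A discrete family of sets: each point has a neighborhood meeting at most one member. -/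
def IsDiscreteFamily (𝒰 : Set (Set X)) : Prop :=
  ∀ x : X, ∃ V : Set X, IsOpen V ∧ x ∈ V ∧ {U | U ∈ 𝒰 ∧ (V ∩ U).Nonempty}.Subsingleton

/-- Countable discrete cellularity. -/
def CDC : Prop :=
  ∀ 𝒰 : Set (Set X), (∀ U ∈ 𝒰, IsOpen U ∧ U.Nonempty) → IsDiscreteFamily X 𝒰 → 𝒰.Countable

/-- Star-cdc: every open cover has a cdc subspace whose star covers the space. -/
def StarCDC : Prop :=
  ∀ 𝒰 : Set (Set X), IsOpenCover X 𝒰 → ∃ Y : Set X, CDC ↥Y ∧ st X Y 𝒰 = Set.univ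

/-- H-closed space: every open cover has a finite subfamily with dense union. -/
def IsHClosedSpace : Prop :=
  ∀ 𝒰 : Set (Set X), IsOpenCover X 𝒰 → ∃ 𝒱 ⊆ 𝒰, 𝒱.Finite ∧ Dense (⋃₀ 𝒱)

/-- Countable cellularity (ccc). -/
def CCCSpace : Prop :=
  ∀ 𝒰 : Set (Set X), (∀ U ∈ 𝒰, IsOpen U ∧ U.Nonempty) → 𝒰.PairwiseDisjoint id → 𝒰.Countable

/-- Weakly Lindelöf space. -/
def WeaklyLindelof : Prop :=
  ∀ 𝒰 : Set (Set X), IsOpenCover X 𝒰 → ∃ 𝒱 ⊆ 𝒰, 𝒱.Countable ∧ Dense (⋃₀ 𝒱)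

/-- Almost Lindelöf space. -/
def AlmostLindelof : Prop :=
  ∀ 𝒰 : Set (Set X), IsOpenCover X 𝒰 → ∃ 𝒱 ⊆ 𝒰, 𝒱.Countable ∧ (⋃ V ∈ 𝒱, closure V) = Set.univ

/-- A π-base: a family of nonempty open sets such that every nonempty open set contains one. -/
def IsPiBase (ℬ : Set (Set X)) : Prop :=
  (∀ B ∈ ℬ, IsOpen B ∧ B.Nonempty) ∧
  ∀ U : Set X, IsOpen U → U.Nonempty → ∃ B ∈ ℬ, B ⊆ U

/-- Power homogeneous: some power of `X` is homogeneous. -/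
def PowerHomogeneous : Prop :=
  ∃ ι : Type u, ∀ x y : ι → X, ∃ h : (ι → X) ≃ₜ (ι → X), h x = y

/-- A strong `G_δ`-diagonal of rank 2. -/
def HasStrongRank2Diagonal : Prop :=
  ∃ 𝒰 : ℕ → Set (Set X), (∀ n, IsOpenCover X (𝒰 n)) ∧
    ∀ x : X, (⋂ n, closure (st X (st X {x} (𝒰 n)) (𝒰 n))) = {x}

/-- A `G_δ`-diagonal of rank 2. -/
def HasRank2Diagonal : Prop :=
  ∃ 𝒰 : ℕ → Set (Set X), (∀ n, IsOpenCover X (𝒰 n)) ∧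
    ∀ x : X, (⋂ n, st X (st X {x} (𝒰 n)) (𝒰 n)) = {x}

/-- A `G_δ`-diagonal of rank 3. -/
def HasRank3Diagonal : Prop :=
  ∃ 𝒰 : ℕ → Set (Set X), (∀ n, IsOpenCover X (𝒰 n)) ∧
    ∀ x : X, (⋂ n, st X (st X (st X {x} (𝒰 n)) (𝒰 n)) (𝒰 n)) = {x}

/-- Basically disconnected: the closure of every cozero set is open. -/
def BasicallyDisconnected : Prop :=
  ∀ f : C(X, ℝ), IsOpen (closure {x | f x ≠ 0})

end Defs

/-!
Every point has an open ccc neighbourhood; weak Lindelöfness picks at most `wL(X)` of them with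
dense union `D`. Each open ccc set `V` has `|V| ≤ πχ(X) ^ ψ_c(X)` (Sun): close off a set `H ⊆ V`
of that size such that whenever at most `ψ_c` closures of countable unions of π-base elements at
points of `H` cover `H`, they cover `V`. Then `V ⊆ H`: given `z ∈ V \ H`, for each `W` in a closed
pseudobase at `z`, ccc gives a countable subfamily dense in the union of the π-base elements at
points of `H` missing `closure W`; these closures cover `H` but miss `z`. So `d(X) ≤ wL · πχ ^ ψ_c`,
and `|X| ≤ d(X) ^ (ψ_c · t)` since a point `x` is determined by the traces on a closed pseudobase
at `x` of a `≤ t`-sized subset of `D` accumulating at `x`.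
-/

namespace Cardinal

lemma power_power_eq_of_le {a e c : Cardinal} (he : ℵ₀ ≤ e) (hce : c ≤ e) (hc : c ≠ 0) :
    (a ^ e) ^ c = a ^ e := by
  rw [← power_mul, mul_eq_left he hce hc]

lemma mul_power_le_power_mul {a b c d : Cardinal} (ha : ℵ₀ ≤ a) (hb : b ≠ 0) (hc : c ≠ 0)
    (hd : d ≠ 0) : a * b ^ c ≤ (a * b) ^ (c * d) := by
  have hab : ℵ₀ ≤ a * b := ha.trans (le_mul_right hb)
  have hcd : 1 ≤ c * d := Cardinal.one_le_iff_ne_zero.2 (mul_ne_zero hc hd)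
  calc a * b ^ c ≤ (a * b) ^ (c * d) * (a * b) ^ (c * d) :=
        mul_le_mul' ((le_mul_right hb).trans (self_le_power _ hcd))
          ((power_le_power_right (le_mul_left (aleph0_pos.trans_le ha).ne')).trans
            (power_le_power_left (aleph0_pos.trans_le hab).ne' (le_mul_right hd)))
    _ = (a * b) ^ (c * d) := mul_eq_self (hab.trans (self_le_power _ hcd))

lemma mk_bounded_subset_le_of_power_le {α : Type u} {s : Set α} {κ μ : Cardinal.{u}}
    (hμ : ℵ₀ ≤ μ) (hs : #s ≤ μ) (hμκ : μ ^ κ ≤ μ) : #{t : Set α // t ⊆ s ∧ #t ≤ κ} ≤ μ :=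
  (mk_bounded_subset_le s κ).trans ((power_le_power_right (max_le hs hμ)).trans hμκ)

lemma exists_lt_of_mk_le_toType_ord_succ {κ : Cardinal.{u}} (hκ : ℵ₀ ≤ κ)
    (S : Set (Order.succ κ).ord.ToType) (hS : #S ≤ κ) : ∃ j, ∀ i ∈ S, i < j := by
  rw [← not_isCofinal_iff]
  intro hS_cofinal
  have hcof := (Order.cof_le hS_cofinal).trans hS
  rw [Ordinal.cof_toType, (isRegular_succ hκ).cof_ord] at hcof
  exact (Order.lt_succ κ).not_ge hcof

/-- Built in `κ⁺` stages: by regularity of `κ⁺`, a `≤ κ`-sized subset of the union lies in the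
union of the stages below some stage. -/
theorem exists_closed_under_small_subsets {α : Type u} {κ μ : Cardinal.{u}} (hκ : ℵ₀ ≤ κ)
    (hμ : ℵ₀ ≤ μ) (hμκ : μ ^ κ ≤ μ) (op : Set α → Set α)
    (hop : ∀ B : Set α, #B ≤ κ → #(op B) ≤ μ) :
    ∃ H : Set α, #H ≤ μ ∧ ∀ B ⊆ H, #B ≤ κ → op B ⊆ H := by
  let J := (Order.succ κ).ord.ToType
  have hJ : #J ≤ μ := by
    rw [mk_ord_toType]
    exact (Order.succ_le_of_lt (cantor κ)).trans
      ((power_le_power_right ((natCast_lt_aleph0 (n := 2)).le.trans hμ)).trans hμκ)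
  let step : Set α → Set α := fun A => ⋃ B : {B : Set α // B ⊆ A ∧ #B ≤ κ}, op B
  have card_step : ∀ A : Set α, #A ≤ μ → #(step A) ≤ μ := fun A hA =>
    calc #(step A) ≤ #{B : Set α // B ⊆ A ∧ #B ≤ κ} * μ :=
          (mk_iUnion_le _).trans (mul_le_mul' le_rfl (ciSup_le' fun B => hop B B.2.2))
      _ ≤ μ * μ := mul_le_mul' (mk_bounded_subset_le_of_power_le hμ hA hμκ) le_rfl
      _ = μ := mul_eq_self hμ
  obtain ⟨f, hf⟩ : ∃ f : J → Set α, ∀ j, f j = step (⋃ i : Iio j, f i) :=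
    ⟨wellFounded_lt.fix fun j ih => step (⋃ i : Iio j, ih i i.2), wellFounded_lt.fix_eq _⟩
  have card_f : ∀ j, #(f j) ≤ μ := by
    intro j
    induction j using WellFoundedLT.induction with
    | ind j ih =>
      rw [hf j]
      refine card_step _ ?_
      calc #(⋃ i : Iio j, f i) ≤ #(Iio j) * μ :=
            (mk_iUnion_le _).trans (mul_le_mul' le_rfl (ciSup_le' fun i => ih i i.2))
        _ ≤ μ * μ := mul_le_mul' ((mk_set_le _).trans hJ) le_rfl
        _ = μ := mul_eq_self hμ
  refine ⟨⋃ j, f j, ?_, fun B hB hBκ => ?_⟩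
  · calc #(⋃ j, f j) ≤ #J * μ :=
          (mk_iUnion_le _).trans (mul_le_mul' le_rfl (ciSup_le' card_f))
      _ ≤ μ * μ := mul_le_mul' hJ le_rfl
      _ = μ := mul_eq_self hμ
  · choose stage h_stage using fun b : B => mem_iUnion.1 (hB b.2)
    obtain ⟨j, hj⟩ :=
      exists_lt_of_mk_le_toType_ord_succ hκ (range stage) (mk_range_le.trans hBκ)
    have hB_early : B ⊆ ⋃ i : Iio j, f i := fun b hb =>
      mem_iUnion.2 ⟨⟨stage ⟨b, hb⟩, hj _ (mem_range_self _)⟩, h_stage _⟩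
    calc op B ⊆ step (⋃ i : Iio j, f i) :=
          subset_iUnion (fun B' : {B' : Set α // B' ⊆ ⋃ i : Iio j, f i ∧ #B' ≤ κ} => op B')
            ⟨B, hB_early, hBκ⟩
      _ = f j := (hf j).symm
      _ ⊆ ⋃ j, f j := subset_iUnion f j

end Cardinal

lemma exists_subset_mk_le_of_subset_biUnion {α γ : Type u} {Q : α → Set γ} {A : Set α}
    {E : Set γ} (hE : E ⊆ ⋃ a ∈ A, Q a) : ∃ B ⊆ A, #B ≤ #E ∧ E ⊆ ⋃ a ∈ B, Q a := by
  choose a haA haQ using fun e : E => mem_iUnion₂.1 (hE e.2)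
  exact ⟨range a, range_subset_iff.2 haA, mk_range_le,
    fun e he => mem_biUnion (mem_range_self ⟨e, he⟩) (haQ ⟨e, he⟩)⟩

lemma exists_maximal_pairwiseDisjoint_subset {α : Type u} (𝒟 : Set (Set α)) :
    ∃ 𝒞 ⊆ 𝒟, 𝒞.PairwiseDisjoint id ∧ ∀ W ∈ 𝒟, W.Nonempty → ∃ C ∈ 𝒞, (W ∩ C).Nonempty := by
  obtain ⟨𝒞, h𝒞⟩ := zorn_subset {𝒞 | 𝒞 ⊆ 𝒟 ∧ 𝒞.PairwiseDisjoint id} fun c hc hchain =>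
    ⟨⋃₀ c, ⟨sUnion_subset fun 𝒞 h𝒞 => (hc h𝒞).1,
      (pairwiseDisjoint_sUnion hchain.directedOn).2 fun 𝒞 h𝒞 => (hc h𝒞).2⟩,
      fun _ => subset_sUnion_of_mem⟩
  refine ⟨𝒞, h𝒞.1.1, h𝒞.1.2, fun W hW hWne => ?_⟩
  by_contra! hdisj
  have hW𝒞 : W ∉ 𝒞 := fun hW𝒞 => by simpa [hWne.ne_empty] using hdisj W hW𝒞
  have hins : insert W 𝒞 ∈ {𝒞 | 𝒞 ⊆ 𝒟 ∧ 𝒞.PairwiseDisjoint id} :=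
    ⟨insert_subset hW h𝒞.1.1, h𝒞.1.2.insert fun C hC _ =>
      Set.disjoint_iff_inter_eq_empty.2 (hdisj C hC)⟩
  exact hW𝒞 (h𝒞.2 hins (subset_insert _ _) (mem_insert _ _))

lemma mk_setOf_countable_families_le {γ : Type u} {P : Set γ} {ψ μ : Cardinal.{u}}
    (hψ : ℵ₀ ≤ ψ) (hμ : ℵ₀ ≤ μ) (hP : #P ≤ μ) (hμψ : μ ^ ψ ≤ μ) :
    #{𝒮 : Set (Set γ) | #𝒮 ≤ ψ ∧ ∀ T ∈ 𝒮, T.Countable ∧ T ⊆ P} ≤ μ := by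
  have hμω : μ ^ ℵ₀ ≤ μ := (power_le_power_left (aleph0_pos.trans_le hμ).ne' hψ).trans hμψ
  calc #{𝒮 : Set (Set γ) | #𝒮 ≤ ψ ∧ ∀ T ∈ 𝒮, T.Countable ∧ T ⊆ P}
      ≤ #{𝒮 : Set (Set γ) // 𝒮 ⊆ {T | T ⊆ P ∧ #T ≤ ℵ₀} ∧ #𝒮 ≤ ψ} :=
        mk_subtype_mono fun 𝒮 h𝒮 => ⟨fun T hT =>
          ⟨(h𝒮.2 T hT).2, le_aleph0_iff_set_countable.2 (h𝒮.2 T hT).1⟩, h𝒮.1⟩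
    _ ≤ μ := mk_bounded_subset_le_of_power_le hμ (mk_bounded_subset_le_of_power_le hμ hP hμω) hμψ

lemma exists_subset_closed_off {α γ : Type u} {Q : α → Set γ} {π ψ : Cardinal.{u}}
    (hπ : ℵ₀ ≤ π) (hψ : ℵ₀ ≤ ψ) (hQ : ∀ a, #(Q a) ≤ π) (V : Set α)
    (cov : Set (Set γ) → Set α) :
    ∃ H ⊆ V, #H ≤ π ^ ψ ∧ ∀ 𝒮 : Set (Set γ), #𝒮 ≤ ψ →
      (∀ T ∈ 𝒮, T.Countable ∧ T ⊆ ⋃ a ∈ H, Q a) → H ⊆ cov 𝒮 → V ⊆ cov 𝒮 := by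
  classical
  set μ := π ^ ψ
  have hμ : ℵ₀ ≤ μ := hπ.trans (self_le_power π (one_le_aleph0.trans hψ))
  have hμψ : μ ^ ψ ≤ μ := (power_power_eq_of_le hψ le_rfl (aleph0_pos.trans_le hψ).ne').le
  let codes : Set α → Set (Set (Set γ)) := fun B =>
    {𝒮 | #𝒮 ≤ ψ ∧ ∀ T ∈ 𝒮, T.Countable ∧ T ⊆ ⋃ a ∈ B, Q a}
  let pick : Set α → Set α := fun s => if h : s.Nonempty then {h.some} else ∅
  let op : Set α → Set α := fun B => ⋃ 𝒮 ∈ codes B, pick (V \ cov 𝒮)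
  have card_op : ∀ B : Set α, #B ≤ ψ → #(op B) ≤ μ := fun B hB => by
    have hψμ : ψ ≤ μ :=
      (cantor ψ).le.trans (power_le_power_right ((natCast_lt_aleph0 (n := 2)).le.trans hπ))
    have hQB : #(⋃ a ∈ B, Q a) ≤ μ :=
      calc #(⋃ a ∈ B, Q a) ≤ #B * π :=
            (mk_biUnion_le _ _).trans (mul_le_mul' le_rfl (ciSup_le' fun a => hQ a))
        _ ≤ μ * μ := mul_le_mul' (hB.trans hψμ) (self_le_power π (one_le_aleph0.trans hψ))
        _ = μ := mul_eq_self hμ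
    have card_pick : ∀ s, #(pick s) ≤ 1 := fun s => by
      by_cases h : s.Nonempty <;> simp [pick, h]
    calc #(op B) ≤ #(codes B) * 1 :=
          (mk_biUnion_le _ _).trans (mul_le_mul' le_rfl (ciSup_le' fun _ => card_pick _))
      _ ≤ μ := by rw [mul_one]; exact mk_setOf_countable_families_le hψ hμ hQB hμψ
  obtain ⟨H, hH, hH_closed⟩ := exists_closed_under_small_subsets hψ hμ hμψ op card_op
  refine ⟨H ∩ V, inter_subset_right, (mk_le_mk_of_subset inter_subset_left).trans hH,
    fun 𝒮 h𝒮 h𝒮T hcov => ?_⟩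
  by_contra hV
  have hne : (V \ cov 𝒮).Nonempty := sdiff_nonempty.2 hV
  obtain ⟨B, hBH, hB, h𝒮B⟩ :=
    exists_subset_mk_le_of_subset_biUnion (sUnion_subset fun T hT => (h𝒮T T hT).2)
  have hBψ : #B ≤ ψ :=
    calc #B ≤ #(⋃₀ 𝒮) := hB
      _ ≤ ψ * ℵ₀ := (mk_sUnion_le 𝒮).trans (mul_le_mul' h𝒮 (ciSup_le' fun T =>
          le_aleph0_iff_set_countable.2 (h𝒮T T T.2).1))
      _ = ψ := mul_eq_left hψ hψ aleph0_ne_zero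
  have hcode : 𝒮 ∈ codes B :=
    ⟨h𝒮, fun T hT => ⟨(h𝒮T T hT).1, (subset_sUnion_of_mem hT).trans h𝒮B⟩⟩
  have hwit : hne.some ∈ op B := mem_biUnion hcode (by simp [pick, hne])
  exact hne.some_mem.2 (hcov ⟨hH_closed B (hBH.trans inter_subset_left) hBψ hwit, hne.some_mem.1⟩)

section Topology

variable {X : Type u} [TopologicalSpace X]

def IsLocalPiBaseAt (x : X) (𝒬 : Set (Set X)) : Prop :=
  (∀ P ∈ 𝒬, IsOpen P ∧ P.Nonempty) ∧ ∀ U : Set X, IsOpen U → x ∈ U → ∃ P ∈ 𝒬, P ⊆ U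

def IsClosedPseudobaseAt (x : X) (𝒱 : Set (Set X)) : Prop :=
  (∀ V ∈ 𝒱, IsOpen V ∧ x ∈ V) ∧ (⋂ V ∈ 𝒱, closure V) = {x}

/-- `V` is ccc as seen from `X`: disjoint families of nonempty open subsets of `X` inside `V` are
countable. -/
def IsCCCOn (V : Set X) : Prop :=
  ∀ 𝒰 : Set (Set X), (∀ U ∈ 𝒰, IsOpen U ∧ U.Nonempty ∧ U ⊆ V) → 𝒰.PairwiseDisjoint id →
    𝒰.Countable

lemma iInter_closure_open_nhds_eq [T2Space X] (x : X) :
    (⋂ W ∈ {W : Set X | IsOpen W ∧ x ∈ W}, closure W) = {x} := by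
  refine Subset.antisymm (fun y hy => ?_) (singleton_subset_iff.2 (mem_iInter₂.2 fun W hW =>
    subset_closure hW.2))
  by_contra hyx
  obtain ⟨U, W, hU, hW, hxU, hyW, hUW⟩ := t2_separation (Ne.symm hyx)
  exact (hUW.closure_left hW).notMem_of_mem_left (mem_iInter₂.1 hy U ⟨hU, hxU⟩) hyW

variable (X) in
lemma wLdeg_spec : ℵ₀ ≤ wLdeg X ∧ ∀ 𝒰 : Set (Set X), IsOpenCover X 𝒰 →
    ∃ 𝒱 ⊆ 𝒰, #𝒱 ≤ wLdeg X ∧ Dense (⋃₀ 𝒱) :=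
  csInf_mem (s := {κ | ℵ₀ ≤ κ ∧ ∀ 𝒰 : Set (Set X), IsOpenCover X 𝒰 →
    ∃ 𝒱 ⊆ 𝒰, #𝒱 ≤ κ ∧ Dense (⋃₀ 𝒱)})
    ⟨max #(Set X) ℵ₀, le_max_right _ _, fun 𝒰 h𝒰 =>
      ⟨𝒰, Subset.rfl, (mk_set_le 𝒰).trans (le_max_left _ _), h𝒰.2 ▸ dense_univ⟩⟩

variable (X) in
lemma tightness_spec : ℵ₀ ≤ tightness X ∧ ∀ (A : Set X) (x : X), x ∈ closure A →
    ∃ B ⊆ A, #B ≤ tightness X ∧ x ∈ closure B :=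
  csInf_mem (s := {κ | ℵ₀ ≤ κ ∧ ∀ (A : Set X) (x : X), x ∈ closure A →
    ∃ B ⊆ A, #B ≤ κ ∧ x ∈ closure B})
    ⟨max #X ℵ₀, le_max_right _ _, fun A _ hx =>
      ⟨A, Subset.rfl, (mk_set_le A).trans (le_max_left _ _), hx⟩⟩

variable (X) in
lemma piCharacter_spec : ℵ₀ ≤ piCharacter X ∧
    ∀ x : X, ∃ 𝒬 : Set (Set X), #𝒬 ≤ piCharacter X ∧ IsLocalPiBaseAt x 𝒬 :=
  csInf_mem (s := {κ | ℵ₀ ≤ κ ∧ ∀ x : X, ∃ 𝒬 : Set (Set X), #𝒬 ≤ κ ∧ IsLocalPiBaseAt x 𝒬})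
    ⟨max #(Set X) ℵ₀, le_max_right _ _, fun x =>
      ⟨{P | IsOpen P ∧ P.Nonempty}, (mk_set_le _).trans (le_max_left _ _),
        fun _ hP => hP, fun U hU hxU => ⟨U, ⟨hU, x, hxU⟩, Subset.rfl⟩⟩⟩

variable (X) in
lemma closedPseudoChar_spec [T2Space X] : ℵ₀ ≤ closedPseudoChar X ∧
    ∀ x : X, ∃ 𝒱 : Set (Set X), #𝒱 ≤ closedPseudoChar X ∧ IsClosedPseudobaseAt x 𝒱 :=
  csInf_mem (s := {κ | ℵ₀ ≤ κ ∧ ∀ x : X, ∃ 𝒱 : Set (Set X), #𝒱 ≤ κ ∧ IsClosedPseudobaseAt x 𝒱})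
    ⟨max #(Set X) ℵ₀, le_max_right _ _, fun x =>
      ⟨{W | IsOpen W ∧ x ∈ W}, (mk_set_le _).trans (le_max_left _ _),
        fun _ hW => hW, iInter_closure_open_nhds_eq x⟩⟩

lemma CCCSpace.isCCCOn {K : Set X} (h : CCCSpace K) : IsCCCOn K := by
  intro 𝒰 h𝒰 hdisj
  have hpre : ((Subtype.val ⁻¹' ·) '' 𝒰 : Set (Set K)).Countable := by
    refine h _ ?_ ?_
    · rintro _ ⟨U, hU, rfl⟩
      obtain ⟨hUo, ⟨x, hx⟩, hUK⟩ := h𝒰 U hU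
      exact ⟨hUo.preimage continuous_subtype_val, ⟨x, hUK hx⟩, hx⟩
    · rintro _ ⟨U, hU, rfl⟩ _ ⟨U', hU', rfl⟩ hne
      exact (hdisj hU hU' fun hUU' => hne (hUU' ▸ rfl)).preimage _
  refine (hpre.image (Subtype.val '' ·)).mono fun U hU => ?_
  refine ⟨_, ⟨U, hU, rfl⟩, ?_⟩
  simp only [Subtype.image_preimage_coe, inter_eq_right.2 (h𝒰 U hU).2.2]

lemma IsCCCOn.mono {K V : Set X} (h : IsCCCOn K) (hVK : V ⊆ K) : IsCCCOn V :=
  fun 𝒰 h𝒰 => h 𝒰 fun U hU => ⟨(h𝒰 U hU).1, (h𝒰 U hU).2.1, (h𝒰 U hU).2.2.trans hVK⟩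

/-- Take a maximal disjoint family of nonempty open sets each inside a member of `𝒢`, and one
member of `𝒢` around each of its (countably many) elements. -/
lemma IsCCCOn.exists_countable_subset_closure_sUnion {V : Set X} (h : IsCCCOn V)
    {𝒢 : Set (Set X)} (h𝒢 : ∀ G ∈ 𝒢, IsOpen G ∧ G ⊆ V) :
    ∃ 𝒯 ⊆ 𝒢, 𝒯.Countable ∧ ⋃₀ 𝒢 ⊆ closure (⋃₀ 𝒯) := by
  obtain ⟨𝒞, h𝒞𝒟, h𝒞disj, h𝒞max⟩ :=
    exists_maximal_pairwiseDisjoint_subset {W : Set X | IsOpen W ∧ W.Nonempty ∧ ∃ G ∈ 𝒢, W ⊆ G}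
  have h𝒞 : 𝒞.Countable := h 𝒞 (fun C hC => by
    obtain ⟨hCo, hCne, G, hG, hCG⟩ := h𝒞𝒟 hC
    exact ⟨hCo, hCne, hCG.trans (h𝒢 G hG).2⟩) h𝒞disj
  have := h𝒞.to_subtype
  choose g hg𝒢 hCg using fun C : 𝒞 => (h𝒞𝒟 C.2).2.2
  refine ⟨range g, range_subset_iff.2 hg𝒢, countable_range g, ?_⟩
  rintro x ⟨G, hG, hxG⟩
  refine mem_closure_iff.2 fun N hN hxN => ?_
  obtain ⟨C, hC, y, hyN, hyC⟩ := h𝒞max (N ∩ G)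
    ⟨hN.inter (h𝒢 G hG).1, ⟨x, hxN, hxG⟩, G, hG, inter_subset_right⟩ ⟨x, hxN, hxG⟩
  exact ⟨y, hyN.1, g ⟨C, hC⟩, mem_range_self _, hCg ⟨C, hC⟩ hyC⟩

lemma IsLocalPiBaseAt.mem_closure_sUnion {x : X} {𝒬 : Set (Set X)} (h : IsLocalPiBaseAt x 𝒬)
    {O : Set X} (hO : IsOpen O) (hxO : x ∈ O) : x ∈ closure (⋃₀ {P ∈ 𝒬 | P ⊆ O}) := by
  refine mem_closure_iff.2 fun N hN hxN => ?_
  obtain ⟨P, hP𝒬, hPNO⟩ := h.2 (N ∩ O) (hN.inter hO) ⟨hxN, hxO⟩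
  obtain ⟨y, hyP⟩ := (h.1 P hP𝒬).2
  exact ⟨y, (hPNO hyP).1, P, ⟨hP𝒬, hPNO.trans inter_subset_right⟩, hyP⟩

lemma exists_separating_family {Q : X → Set (Set X)} (hQ : ∀ x, IsLocalPiBaseAt x (Q x))
    {V : Set X} (hV : IsOpen V) (hccc : IsCCCOn V) {H : Set X} (hHV : H ⊆ V) {z : X}
    (hzH : z ∉ H) {𝒲 : Set (Set X)} (h𝒲 : IsClosedPseudobaseAt z 𝒲) :
    ∃ 𝒮 : Set (Set (Set X)), #𝒮 ≤ #𝒲 ∧ (∀ T ∈ 𝒮, T.Countable ∧ T ⊆ ⋃ a ∈ H, Q a) ∧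
      H ⊆ (⋃ T ∈ 𝒮, closure (⋃₀ T)) ∧ z ∉ ⋃ T ∈ 𝒮, closure (⋃₀ T) := by
  have hsel : ∀ W : Set X, ∃ T ⊆ {P ∈ ⋃ a ∈ H, Q a | P ⊆ V \ closure W}, T.Countable ∧
      ⋃₀ {P ∈ ⋃ a ∈ H, Q a | P ⊆ V \ closure W} ⊆ closure (⋃₀ T) := fun W =>
    hccc.exists_countable_subset_closure_sUnion fun P hP => by
      obtain ⟨a, -, hPa⟩ := mem_iUnion₂.1 hP.1
      exact ⟨((hQ a).1 P hPa).1, hP.2.trans sdiff_subset⟩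
  choose T hT_sub hT_countable hT_dense using hsel
  refine ⟨T '' 𝒲, mk_image_le, ?_, fun h hh => ?_, ?_⟩
  · rintro _ ⟨W, -, rfl⟩
    exact ⟨hT_countable W, fun P hP => (hT_sub W hP).1⟩
  · obtain ⟨W, hW, hhW⟩ : ∃ W ∈ 𝒲, h ∉ closure W := by
      have : h ∉ ⋂ W ∈ 𝒲, closure W := by
        rw [h𝒲.2, mem_singleton_iff]
        exact fun hhz => hzH (hhz ▸ hh)
      simpa using this
    refine mem_biUnion (mem_image_of_mem T hW) (closure_minimal (hT_dense W) isClosed_closure ?_)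
    have hQh : {P ∈ Q h | P ⊆ V \ closure W} ⊆ {P ∈ ⋃ a ∈ H, Q a | P ⊆ V \ closure W} :=
      fun P hP => ⟨mem_biUnion hh hP.1, hP.2⟩
    exact closure_mono (sUnion_mono hQh)
      ((hQ h).mem_closure_sUnion (hV.sdiff isClosed_closure) ⟨hHV hh, hhW⟩)
  · simp only [mem_iUnion, mem_image, exists_prop]
    rintro ⟨_, ⟨W, hW, rfl⟩, hz⟩
    obtain ⟨y, hyW, P, hPT, hyP⟩ := mem_closure_iff.1 hz W (h𝒲.1 W hW).1 (h𝒲.1 W hW).2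
    exact ((hT_sub W hPT).2 hyP).2 (subset_closure hyW)

end Topology

section Bounds

variable {X : Type u} [TopologicalSpace X] [T2Space X]

theorem mk_le_piCharacter_power_of_isCCCOn {V : Set X} (hV : IsOpen V) (hccc : IsCCCOn V) :
    #V ≤ piCharacter X ^ closedPseudoChar X := by
  obtain ⟨hπ, hQ⟩ := piCharacter_spec X
  obtain ⟨hψ, h𝒲⟩ := closedPseudoChar_spec X
  choose Q hQ_card hQ using hQ
  choose 𝒲 h𝒲_card h𝒲 using h𝒲
  obtain ⟨H, hHV, hH_card, hH⟩ :=
    exists_subset_closed_off hπ hψ hQ_card V fun 𝒮 => ⋃ T ∈ 𝒮, closure (⋃₀ T)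
  refine (mk_le_mk_of_subset fun z hzV => ?_).trans hH_card
  by_contra hzH
  obtain ⟨𝒮, h𝒮_card, h𝒮, hH𝒮, hz𝒮⟩ := exists_separating_family hQ hV hccc hHV hzH (h𝒲 z)
  exact hz𝒮 (hH 𝒮 (h𝒮_card.trans (h𝒲_card z)) h𝒮 hH𝒮 hzV)

theorem mk_le_of_dense {D : Set X} (hD : Dense D) {μ : Cardinal.{u}} (hμ : ℵ₀ ≤ μ)
    (hDμ : #D ≤ μ) (hμt : μ ^ tightness X ≤ μ) (hμψ : μ ^ closedPseudoChar X ≤ μ) :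
    #X ≤ μ := by
  obtain ⟨-, htight⟩ := tightness_spec X
  obtain ⟨-, h𝒲⟩ := closedPseudoChar_spec X
  choose 𝒲 h𝒲_card h𝒲 using h𝒲
  choose B hBD hB_card hxB using fun x => htight D x (hD x)
  let trace : X → Set (Set X) := fun x => (B x ∩ ·) '' 𝒲 x
  have mem_closure_trace : ∀ x, ∀ S ∈ trace x, x ∈ closure S := by
    rintro x _ ⟨W, hW, rfl⟩
    exact (h𝒲 x).1 W hW |>.1.closure_inter ⟨hxB x, ((h𝒲 x).1 W hW).2⟩
  have trace_injective : Function.Injective trace := by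
    intro x y hxy
    have hy : y ∈ ⋂ W ∈ 𝒲 x, closure W := mem_iInter₂.2 fun W hW => by
      have hWy : B x ∩ W ∈ trace y := hxy ▸ ⟨W, hW, rfl⟩
      exact closure_mono inter_subset_right (mem_closure_trace y _ hWy)
    rw [(h𝒲 x).2] at hy
    exact hy.symm
  have trace_mem : ∀ x, trace x ⊆ {S | S ⊆ D ∧ #S ≤ tightness X} := by
    rintro x _ ⟨W, -, rfl⟩
    exact ⟨inter_subset_left.trans (hBD x),
      (mk_le_mk_of_subset inter_subset_left).trans (hB_card x)⟩
  calc #X ≤ #{𝒜 : Set (Set X) // 𝒜 ⊆ {S | S ⊆ D ∧ #S ≤ tightness X} ∧ #𝒜 ≤ closedPseudoChar X} :=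
        mk_le_of_injective (f := fun x => ⟨trace x, trace_mem x, mk_image_le.trans (h𝒲_card x)⟩)
          fun x y h => trace_injective (congrArg Subtype.val h)
    _ ≤ μ := mk_bounded_subset_le_of_power_le hμ (mk_bounded_subset_le_of_power_le hμ hDμ hμt) hμψ

theorem exists_dense_mk_le_wLdeg_mul (h : ∀ x : X, ∃ K ∈ nhds x, CCCSpace ↥K) :
    ∃ D : Set X, Dense D ∧ #D ≤ wLdeg X * piCharacter X ^ closedPseudoChar X := by
  choose K hK hK_ccc using h
  have hcover : IsOpenCover X (range fun x => interior (K x)) :=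
    ⟨by rintro _ ⟨x, rfl⟩; exact isOpen_interior, eq_univ_of_forall fun x =>
      mem_sUnion.2 ⟨_, ⟨x, rfl⟩, mem_interior_iff_mem_nhds.2 (hK x)⟩⟩
  obtain ⟨𝒱, h𝒱, h𝒱_card, h𝒱_dense⟩ := (wLdeg_spec X).2 _ hcover
  refine ⟨⋃₀ 𝒱, h𝒱_dense, (mk_sUnion_le 𝒱).trans (mul_le_mul' h𝒱_card (ciSup_le' ?_))⟩
  rintro ⟨_, hV⟩
  obtain ⟨x, rfl⟩ := h𝒱 hV
  exact mk_le_piCharacter_power_of_isCCCOn isOpen_interior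
    ((hK_ccc x).isCCCOn.mono interior_subset)

end Bounds

theorem stmt14 (X : Type u) [TopologicalSpace X] [T2Space X]
    (h : ∀ x : X, ∃ K ∈ nhds x, CCCSpace ↥K) :
    #X ≤ (wLdeg X * piCharacter X) ^ (closedPseudoChar X * tightness X) := by
  obtain ⟨D, hD, hD_card⟩ := exists_dense_mk_le_wLdeg_mul h
  have ne_zero : ∀ {c : Cardinal.{u}}, ℵ₀ ≤ c → c ≠ 0 := fun hc => (aleph0_pos.trans_le hc).ne'
  have hw := (wLdeg_spec X).1
  have hπ := ne_zero (piCharacter_spec X).1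
  have hψ := (closedPseudoChar_spec X).1
  have ht := (tightness_spec X).1
  have hψt : ℵ₀ ≤ closedPseudoChar X * tightness X := hψ.trans (le_mul_right (ne_zero ht))
  have hμ : ℵ₀ ≤ (wLdeg X * piCharacter X) ^ (closedPseudoChar X * tightness X) :=
    (hw.trans (le_mul_right hπ)).trans (self_le_power _ (one_le_aleph0.trans hψt))
  exact mk_le_of_dense hD hμ
    (hD_card.trans (mul_power_le_power_mul hw hπ (ne_zero hψ) (ne_zero ht)))
    (power_power_eq_of_le hψt (le_mul_left (ne_zero hψ)) (ne_zero ht)).le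
    (power_power_eq_of_le hψt (le_mul_right (ne_zero ht)) (ne_zero hψ)).le
end

section
/- If X is a Hausdorff space with a π-base whose elements have compact closures, then |X| ≤ 2^(ψ_c(X)·t(X)·wL(X)). -/
open Cardinal Set

universe u

/-!
Fix `κ ≥ ψ_c(X) t(X) wL(X)`. Tightness and closed pseudocharacter at most `κ` give
`|cl M| ≤ 2^κ` whenever `|M| ≤ 2^κ`: every point of `cl M` is the only point common to the
closures of `κ` many subsets of `M` of size `κ`. A closing-off argument of length `κ⁺` then shows
that compact sets, hence the members of the π-base, have size at most `2^κ`; this replaces the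
bound `|K| ≤ 2^ψ(K)` for compact Hausdorff `K`.

A second closing-off produces `𝒜 ⊆ ℬ` with `|𝒜| ≤ 2^κ` such that every `κ`-small family `𝒲` of
finite intersections of the local open sets at points of `R = cl ⋃ 𝒜` that misses some member of
`ℬ` already misses some member of `𝒜`. If `R ≠ X`, choose `B₁ ∈ ℬ` with compact closure outside
`R`, separate every point of `R` from `cl B₁` by such a finite intersection, and apply `wL(X) ≤ κ`
to these sets together with `X \ R`. The family `𝒲` obtained misses `B₁`, hence some `B ∈ 𝒜`; but
`B ⊆ R` meets its dense union. So `X = R` and `|X| ≤ 2^κ`.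
-/

section ClosingOff

variable {γ δ : Type u} {κ : Cardinal.{u}}

theorem Cardinal.mk_bounded_subset_le_two_power (hκ : ℵ₀ ≤ κ) {s : Set γ} (hs : #s ≤ 2 ^ κ) :
    #{t : Set γ // t ⊆ s ∧ #t ≤ κ} ≤ 2 ^ κ :=
  calc #{t : Set γ // t ⊆ s ∧ #t ≤ κ} ≤ max #s ℵ₀ ^ κ := mk_bounded_subset_le s κ
    _ ≤ (2 ^ κ) ^ κ := power_le_power_right (max_le hs (hκ.trans (cantor κ).le))
    _ = 2 ^ κ := by rw [← power_mul, mul_eq_self hκ]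

theorem Cardinal.mk_biUnion_le_of_mk_le {c : Cardinal.{u}} (hc : ℵ₀ ≤ c) {s : Set γ}
    (hs : #s ≤ c) {A : γ → Set δ} (hA : ∀ i ∈ s, #(A i) ≤ c) : #(⋃ i ∈ s, A i) ≤ c :=
  calc #(⋃ i ∈ s, A i) ≤ #s * ⨆ i : s, #(A i) := mk_biUnion_le A s
    _ ≤ c * c := mul_le_mul' hs (ciSup_le' fun i => hA i i.2)
    _ = c := mul_eq_self hc

theorem Cardinal.mk_sUnion_le_of_mk_le {c : Cardinal.{u}} (hc : ℵ₀ ≤ c) {𝒞 : Set (Set γ)}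
    (h𝒞 : #𝒞 ≤ c) (hA : ∀ A ∈ 𝒞, #A ≤ c) : #(⋃₀ 𝒞) ≤ c := by
  rw [sUnion_eq_biUnion]
  exact mk_biUnion_le_of_mk_le hc h𝒞 hA

theorem exists_mk_le_two_power_inter_nonempty (hκ : ℵ₀ ≤ κ) {s : Set γ} (hs : #s ≤ 2 ^ κ)
    (Q : Set γ → Set δ) : ∃ S : Set δ, #S ≤ 2 ^ κ ∧
      ∀ 𝒲 ⊆ s, #𝒲 ≤ κ → (Q 𝒲).Nonempty → (S ∩ Q 𝒲).Nonempty :=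
  ⟨range fun 𝒲 : {𝒲 // (𝒲 ⊆ s ∧ #𝒲 ≤ κ) ∧ (Q 𝒲).Nonempty} => 𝒲.2.2.some,
    mk_range_le.trans ((mk_subtype_mono fun _ h => h.1).trans
      (mk_bounded_subset_le_two_power hκ hs)),
    fun 𝒲 h𝒲s h𝒲κ hQ => ⟨_, mem_range_self ⟨𝒲, ⟨h𝒲s, h𝒲κ⟩, hQ⟩, hQ.some_mem⟩⟩

theorem exists_subset_of_mk_lt_cof {F : Ordinal.{u} → Set γ} (hF : Monotone F) {ν : Ordinal.{u}}
    {C : Set γ} (hC : C ⊆ ⋃ α < ν, F α) (hCν : #C < ν.cof) : ∃ α < ν, C ⊆ F α := by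
  have hstage : ∀ c : C, ∃ α < ν, c.1 ∈ F α := fun c => by simpa using hC c.2
  choose α hαν hcα using hstage
  exact ⟨⨆ c, α c, Ordinal.iSup_lt_of_lt_cof hCν hαν,
    fun c hc => hF (Ordinal.le_iSup α ⟨c, hc⟩) (hcα ⟨c, hc⟩)⟩

noncomputable def closingOffStage (G : Set γ → Set γ) (κ : Cardinal.{u}) : Ordinal.{u} → Set γ :=
  wellFounded_lt.fix fun α stage => ⋃₀ (G '' {C | C ⊆ ⋃ (β) (h : β < α), stage β h ∧ #C ≤ κ})

variable {G : Set γ → Set γ}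

theorem closingOffStage_eq (α : Ordinal.{u}) : closingOffStage G κ α =
    ⋃₀ (G '' {C | C ⊆ ⋃ β < α, closingOffStage G κ β ∧ #C ≤ κ}) :=
  wellFounded_lt.fix_eq _ α

theorem closingOffStage_mono : Monotone (closingOffStage G κ) := by
  intro β α hβα
  rw [closingOffStage_eq β, closingOffStage_eq α]
  refine sUnion_mono (image_mono fun C hC => ⟨hC.1.trans ?_, hC.2⟩)
  exact biUnion_mono (fun δ hδ => lt_of_lt_of_le hδ hβα) fun _ _ => subset_rfl

theorem mk_closingOffStage_le (hκ : ℵ₀ ≤ κ) (hG : ∀ C, #(G C) ≤ 2 ^ κ) {α : Ordinal.{u}}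
    (hα : α < (Order.succ κ).ord) : #(closingOffStage G κ α) ≤ 2 ^ κ := by
  induction α using WellFoundedLT.induction with | ind α IH
  have h2κ : ℵ₀ ≤ 2 ^ κ := hκ.trans (cantor κ).le
  have hprev : #(⋃ β < α, closingOffStage G κ β) ≤ 2 ^ κ :=
    mk_biUnion_le_of_le ((lt_ord.mp hα).le.trans (Order.succ_le_of_lt (cantor κ))) h2κ _
      fun β hβ => IH β hβ (hβ.trans hα)
  rw [closingOffStage_eq]
  exact mk_sUnion_le_of_mk_le h2κ (mk_image_le.trans (mk_bounded_subset_le_two_power hκ hprev))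
    (forall_mem_image.mpr fun C _ => hG C)

/-- The closing-off argument: `A` is the union of the first `κ⁺` stages, and by regularity of
`κ⁺` each `κ`-small subset of `A` already lies in a single stage. -/
theorem exists_closed_under_of_mk_le (hκ : ℵ₀ ≤ κ) (U : Set γ) (P : Set γ → Set γ → Prop)
    (hP_mono : ∀ C, Monotone (P C))
    (hP : ∀ C ⊆ U, #C ≤ κ → ∃ S ⊆ U, #S ≤ 2 ^ κ ∧ P C S) :
    ∃ A ⊆ U, #A ≤ 2 ^ κ ∧ ∀ C ⊆ A, #C ≤ κ → P C A := by
  have hG : ∀ C, ∃ S ⊆ U, #S ≤ 2 ^ κ ∧ (C ⊆ U → #C ≤ κ → P C S) := by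
    intro C
    by_cases hC : C ⊆ U ∧ #C ≤ κ
    · obtain ⟨S, hSU, hS, hPS⟩ := hP C hC.1 hC.2
      exact ⟨S, hSU, hS, fun _ _ => hPS⟩
    · exact ⟨∅, empty_subset U, by simp, fun h h' => absurd ⟨h, h'⟩ hC⟩
  choose G hGU hGcard hGP using hG
  set ν := (Order.succ κ).ord
  have hν : Order.IsSuccLimit ν := isSuccLimit_ord (hκ.trans (Order.le_succ κ))
  have hstageU : ∀ α, closingOffStage G κ α ⊆ U := fun α => by
    rw [closingOffStage_eq]
    exact sUnion_subset (forall_mem_image.mpr fun C _ => hGU C)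
  refine ⟨⋃ α < ν, closingOffStage G κ α, iUnion₂_subset fun α _ => hstageU α, ?_, ?_⟩
  · exact mk_biUnion_le_of_le (by rw [card_ord]; exact Order.succ_le_of_lt (cantor κ))
      (hκ.trans (cantor κ).le) _ fun α hα => mk_closingOffStage_le hκ hGcard hα
  · intro C hC hCκ
    obtain ⟨α, hαν, hCα⟩ := exists_subset_of_mk_lt_cof closingOffStage_mono hC
      (by rw [(isRegular_succ hκ).cof_ord]; exact hCκ.trans_lt (Order.lt_succ κ))
    have hGC : G C ⊆ closingOffStage G κ (Order.succ α) := by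
      rw [closingOffStage_eq]
      exact subset_sUnion_of_mem
        ⟨C, ⟨hCα.trans (subset_biUnion_of_mem (Order.lt_succ α)), hCκ⟩, rfl⟩
    refine hP_mono C (hGC.trans (subset_biUnion_of_mem (hν.succ_lt hαν))) (hGP C ?_ hCκ)
    exact hC.trans (iUnion₂_subset fun β _ => hstageU β)

end ClosingOff

section CardinalFunctions

variable {X : Type u} [TopologicalSpace X] {κ : Cardinal.{u}}

theorem tightness_mem : tightness X ∈ {κ | ℵ₀ ≤ κ ∧ ∀ (A : Set X) (x : X), x ∈ closure A →
    ∃ B ⊆ A, #B ≤ κ ∧ x ∈ closure B} :=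
  csInf_mem ⟨max ℵ₀ #X, le_max_left _ _, fun A _ hx =>
    ⟨A, subset_rfl, (mk_set_le A).trans (le_max_right _ _), hx⟩⟩

theorem biInter_closure_isOpen_mem_eq_singleton [T2Space X] (x : X) :
    ⋂ V ∈ {V : Set X | IsOpen V ∧ x ∈ V}, closure V = {x} := by
  refine subset_antisymm (fun z hz => ?_) (singleton_subset_iff.mpr
    (mem_iInter₂.mpr fun V hV => subset_closure hV.2))
  by_contra hzx
  obtain ⟨U, W, hU, hW, hxU, hzW, hUW⟩ := t2_separation (Ne.symm hzx)
  exact disjoint_left.mp (hUW.closure_left hW) (mem_iInter₂.mp hz U ⟨hU, hxU⟩) hzW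

theorem closedPseudoChar_mem [T2Space X] : closedPseudoChar X ∈ {κ | ℵ₀ ≤ κ ∧
    ∀ x : X, ∃ 𝒱 : Set (Set X), #𝒱 ≤ κ ∧ (∀ V ∈ 𝒱, IsOpen V ∧ x ∈ V) ∧
      (⋂ V ∈ 𝒱, closure V) = {x}} :=
  csInf_mem ⟨max ℵ₀ (2 ^ #X), le_max_left _ _, fun x => ⟨{V | IsOpen V ∧ x ∈ V},
    (mk_set_le _).trans (by rw [mk_set]; exact le_max_right _ _), fun _ hV => hV,
    biInter_closure_isOpen_mem_eq_singleton x⟩⟩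

theorem wLdeg_mem : wLdeg X ∈ {κ | ℵ₀ ≤ κ ∧ ∀ 𝒰 : Set (Set X), IsOpenCover X 𝒰 →
    ∃ 𝒱 ⊆ 𝒰, #𝒱 ≤ κ ∧ Dense (⋃₀ 𝒱)} :=
  csInf_mem ⟨max ℵ₀ (2 ^ #X), le_max_left _ _, fun 𝒰 h𝒰 =>
    ⟨𝒰, subset_rfl, (mk_set_le 𝒰).trans (by rw [mk_set]; exact le_max_right _ _),
      by rw [h𝒰.2]; exact dense_univ⟩⟩

theorem exists_subset_mk_le_mem_closure_of_tightness_le (ht : tightness X ≤ κ) {A : Set X}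
    {x : X} (hx : x ∈ closure A) : ∃ B ⊆ A, #B ≤ κ ∧ x ∈ closure B :=
  let ⟨B, hBA, hB, hxB⟩ := tightness_mem.2 A x hx
  ⟨B, hBA, hB.trans ht, hxB⟩

theorem exists_biInter_closure_eq_singleton_of_closedPseudoChar_le [T2Space X]
    (hψ : closedPseudoChar X ≤ κ) (x : X) : ∃ 𝒱 : Set (Set X), #𝒱 ≤ κ ∧
      (∀ V ∈ 𝒱, IsOpen V ∧ x ∈ V) ∧ ⋂ V ∈ 𝒱, closure V = {x} :=
  let ⟨𝒱, h𝒱, h𝒱x, h𝒱eq⟩ := closedPseudoChar_mem.2 x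
  ⟨𝒱, h𝒱.trans hψ, h𝒱x, h𝒱eq⟩

theorem exists_dense_sUnion_of_wLdeg_le (hw : wLdeg X ≤ κ) {𝒰 : Set (Set X)}
    (h𝒰 : IsOpenCover X 𝒰) : ∃ 𝒱 ⊆ 𝒰, #𝒱 ≤ κ ∧ Dense (⋃₀ 𝒱) :=
  let ⟨𝒱, h𝒱𝒰, h𝒱, hdense⟩ := wLdeg_mem.2 𝒰 h𝒰
  ⟨𝒱, h𝒱𝒰, h𝒱.trans hw, hdense⟩

end CardinalFunctions

section Topology

variable {X : Type u} [TopologicalSpace X] {κ : Cardinal.{u}}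

theorem exists_local_family_disjoint_of_closedPseudoChar_le [T2Space X]
    (hψ : closedPseudoChar X ≤ κ) (y : X) : ∃ 𝒩 : Set (Set X), #𝒩 ≤ κ ∧
      (∀ T ∈ 𝒩, IsOpen T ∧ y ∈ T) ∧ ∀ K, IsCompact K → y ∉ K → ∃ T ∈ 𝒩, Disjoint T K := by
  classical
  obtain ⟨𝒱, h𝒱κ, h𝒱y, h𝒱⟩ := exists_biInter_closure_eq_singleton_of_closedPseudoChar_le hψ y
  refine ⟨range fun t : Finset 𝒱 => ⋂ V ∈ t, (V : Set X), mk_range_le.trans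
    ((mk_le_of_surjective List.toFinset_surjective).trans ((mk_list_le_max _).trans
      (max_le (closedPseudoChar_mem.1.trans hψ) h𝒱κ))), ?_, fun K hK hyK => ?_⟩
  · rintro _ ⟨t, rfl⟩
    exact ⟨isOpen_biInter_finset fun V _ => (h𝒱y V V.2).1, mem_iInter₂.mpr fun V _ => (h𝒱y V V.2).2⟩
  · have hKy : K ∩ ⋂ V : 𝒱, closure (V : Set X) = ∅ := by
      rw [← biInter_eq_iInter 𝒱 fun V _ => closure V, h𝒱, inter_singleton_eq_empty.mpr hyK]
    obtain ⟨t, ht⟩ := hK.elim_finite_subfamily_closed _ (fun _ => isClosed_closure) hKy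
    refine ⟨_, ⟨t, rfl⟩, disjoint_left.mpr fun z hz hzK => ?_⟩
    have : z ∈ K ∩ ⋂ V ∈ t, closure (V : Set X) :=
      ⟨hzK, mem_iInter₂.mpr fun V hV => subset_closure (mem_iInter₂.mp hz V hV)⟩
    rwa [ht] at this

theorem mk_closure_le_two_power [T2Space X] (ht : tightness X ≤ κ)
    (hψ : closedPseudoChar X ≤ κ) {M : Set X} (hM : #M ≤ 2 ^ κ) : #(closure M) ≤ 2 ^ κ := by
  have hκ : ℵ₀ ≤ κ := tightness_mem.1.trans ht
  have hcode : ∀ y ∈ closure M, ∃ 𝒞 : Set (Set X), 𝒞 ⊆ {C | C ⊆ M ∧ #C ≤ κ} ∧ #𝒞 ≤ κ ∧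
      ⋂ C ∈ 𝒞, closure C = {y} := by
    intro y hy
    obtain ⟨𝒱, h𝒱κ, h𝒱y, h𝒱⟩ := exists_biInter_closure_eq_singleton_of_closedPseudoChar_le hψ y
    have hC : ∀ V : 𝒱, ∃ C ⊆ V.1 ∩ M, #C ≤ κ ∧ y ∈ closure C := fun V =>
      exists_subset_mk_le_mem_closure_of_tightness_le ht
        ((h𝒱y V V.2).1.inter_closure ⟨(h𝒱y V V.2).2, hy⟩)
    choose C hCM hCκ hyC using hC
    refine ⟨range C, range_subset_iff.mpr fun V => ⟨(hCM V).trans inter_subset_right, hCκ V⟩,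
      mk_range_le.trans h𝒱κ, subset_antisymm ?_ ?_⟩
    · rw [← h𝒱]
      exact iInter₂_mono' fun V hV =>
        ⟨C ⟨V, hV⟩, mem_range_self _, closure_mono ((hCM _).trans inter_subset_left)⟩
    · rw [singleton_subset_iff]
      exact mem_iInter₂.mpr (forall_mem_range.mpr hyC)
  choose! code hcodeM hcodeκ hcode using hcode
  calc #(closure M) ≤ #{𝒞 : Set (Set X) // 𝒞 ⊆ {C | C ⊆ M ∧ #C ≤ κ} ∧ #𝒞 ≤ κ} :=
        mk_le_of_injective (f := fun y : closure M => ⟨code y, hcodeM y y.2, hcodeκ y y.2⟩)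
          fun y z h => Subtype.ext <| singleton_injective <| (hcode y y.2).symm.trans <|
            (congrArg (fun 𝒞 => ⋂ C ∈ 𝒞.1, closure C) h).trans (hcode z z.2)
    _ ≤ 2 ^ κ := mk_bounded_subset_le_two_power hκ (mk_bounded_subset_le_two_power hκ hM)

/-- If `q ∈ K \ A`, finitely many local sets at points of the compact set `K ∩ A` cover it and
miss `q`; the hypothesis then puts a point of `K ∩ A` outside them. -/
theorem IsCompact.subset_of_inter_nonempty {K A : Set X} (hK : IsCompact K) (hA : IsClosed A)
    (hκ : ℵ₀ ≤ κ) {𝒩 : X → Set (Set X)} (h𝒩y : ∀ y, ∀ T ∈ 𝒩 y, IsOpen T ∧ y ∈ T)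
    (h𝒩K : ∀ y (L : Set X), IsCompact L → y ∉ L → ∃ T ∈ 𝒩 y, Disjoint T L)
    (hKA : ∀ C ⊆ A, #C ≤ κ → ∀ 𝒲 ⊆ ⋃ y ∈ C, 𝒩 y, #𝒲 ≤ κ →
      (K \ ⋃₀ 𝒲).Nonempty → (A ∩ (K \ ⋃₀ 𝒲)).Nonempty) : K ⊆ A := by
  intro q hqK
  by_contra hqA
  have hT : ∀ y : ↥(K ∩ A), ∃ T ∈ 𝒩 y, Disjoint T {q} := fun y =>
    h𝒩K y {q} isCompact_singleton fun h => hqA (h ▸ y.2.2)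
  choose T hT𝒩 hTq using hT
  obtain ⟨t, hcover⟩ := (hK.inter_right hA).elim_finite_subcover T
    (fun y => (h𝒩y y _ (hT𝒩 y)).1) fun y hy => mem_iUnion.mpr ⟨⟨y, hy⟩, (h𝒩y y _ (hT𝒩 ⟨y, hy⟩)).2⟩
  have hfin : ∀ {Y : Type u} (f : ↥(K ∩ A) → Y), #(f '' t) ≤ κ := fun f =>
    mk_image_le.trans ((finset_card_lt_aleph0 t).le.trans hκ)
  obtain ⟨z, hzA, hzK, hz⟩ := hKA _ (image_subset_iff.mpr fun y _ => y.2.2) (hfin Subtype.val)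
    (T '' t) (image_subset_iff.mpr fun y hy => mem_biUnion (mem_image_of_mem _ hy) (hT𝒩 y))
    (hfin T) ⟨q, hqK, fun ⟨_, ⟨y, _, hy⟩, hqy⟩ => disjoint_left.mp (hTq y) (hy ▸ hqy) rfl⟩
  obtain ⟨y, hyt, hzy⟩ := mem_iUnion₂.mp (hcover ⟨hzK, hzA⟩)
  exact hz ⟨T y, mem_image_of_mem T hyt, hzy⟩

theorem IsCompact.mk_le_two_power [T2Space X] (ht : tightness X ≤ κ)
    (hψ : closedPseudoChar X ≤ κ) {K : Set X} (hK : IsCompact K) : #K ≤ 2 ^ κ := by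
  have hκ : ℵ₀ ≤ κ := tightness_mem.1.trans ht
  have h2κ : ℵ₀ ≤ 2 ^ κ := hκ.trans (cantor κ).le
  choose 𝒩 h𝒩κ h𝒩y h𝒩K using exists_local_family_disjoint_of_closedPseudoChar_le hψ
  obtain ⟨A, -, hAκ, hA⟩ := exists_closed_under_of_mk_le hκ Set.univ
    (fun C S => closure C ⊆ S ∧ ∀ 𝒲 ⊆ ⋃ y ∈ C, 𝒩 y, #𝒲 ≤ κ →
      (K \ ⋃₀ 𝒲).Nonempty → (S ∩ (K \ ⋃₀ 𝒲)).Nonempty)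
    (fun _ _ _ hST h => ⟨h.1.trans hST, fun 𝒲 h𝒲 h𝒲κ hne =>
      (h.2 𝒲 h𝒲 h𝒲κ hne).mono (inter_subset_inter_left _ hST)⟩)
    fun C _ hCκ => by
      obtain ⟨S, hSκ, hS⟩ := exists_mk_le_two_power_inter_nonempty hκ
        (mk_biUnion_le_of_mk_le h2κ (hCκ.trans (cantor κ).le)
          fun y _ => (h𝒩κ y).trans (cantor κ).le) fun 𝒲 => K \ ⋃₀ 𝒲
      refine ⟨closure C ∪ S, subset_univ _, (mk_union_le _ _).trans ?_, subset_union_left,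
        fun 𝒲 h𝒲 h𝒲κ hne => (hS 𝒲 h𝒲 h𝒲κ hne).mono (inter_subset_inter_left _ subset_union_right)⟩
      calc _ ≤ 2 ^ κ + 2 ^ κ :=
            add_le_add (mk_closure_le_two_power ht hψ (hCκ.trans (cantor κ).le)) hSκ
        _ = 2 ^ κ := add_eq_self h2κ
  have hAclosed : IsClosed A := closure_subset_iff_isClosed.mp fun x hx => by
    obtain ⟨C, hCA, hCκ, hxC⟩ := exists_subset_mk_le_mem_closure_of_tightness_le ht hx
    exact (hA C hCA hCκ).1 hxC
  exact (mk_le_mk_of_subset (hK.subset_of_inter_nonempty hAclosed hκ h𝒩y h𝒩K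
    fun C hCA hCκ => (hA C hCA hCκ).2)).trans hAκ

theorem exists_subset_mk_le_subset_closure_sUnion (ht : tightness X ≤ κ) {𝒜 : Set (Set X)}
    {D : Set X} (hD : D ⊆ closure (⋃₀ 𝒜)) (hDκ : #D ≤ κ) :
    ∃ 𝒞 ⊆ 𝒜, #𝒞 ≤ κ ∧ D ⊆ closure (⋃₀ 𝒞) := by
  have hy : ∀ y : D, ∃ 𝒞 ⊆ 𝒜, #𝒞 ≤ κ ∧ y.1 ∈ closure (⋃₀ 𝒞) := by
    intro y
    obtain ⟨C, hC𝒜, hCκ, hyC⟩ := exists_subset_mk_le_mem_closure_of_tightness_le ht (hD y.2)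
    choose B hB𝒜 hcB using fun c : C => mem_sUnion.mp (hC𝒜 c.2)
    exact ⟨range B, range_subset_iff.mpr hB𝒜, mk_range_le.trans hCκ,
      closure_mono (fun c hc => mem_sUnion_of_mem (hcB ⟨c, hc⟩) (mem_range_self _)) hyC⟩
  choose 𝒞 h𝒞𝒜 h𝒞κ hy𝒞 using hy
  refine ⟨⋃ y, 𝒞 y, iUnion_subset h𝒞𝒜, (mk_iUnion_le _).trans ?_,
    fun y hy => closure_mono (sUnion_mono (subset_iUnion 𝒞 ⟨y, hy⟩)) (hy𝒞 ⟨y, hy⟩)⟩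
  calc _ ≤ κ * κ := mul_le_mul' hDκ (ciSup_le' h𝒞κ)
    _ = κ := mul_eq_self (tightness_mem.1.trans ht)

theorem IsPiBase.exists_closure_subset [T2Space X] {ℬ : Set (Set X)} (hB : IsPiBase X ℬ)
    (hc : ∀ B ∈ ℬ, IsCompact (closure B)) {U : Set X} (hU : IsOpen U) (hne : U.Nonempty) :
    ∃ B ∈ ℬ, closure B ⊆ U := by
  obtain ⟨B₂, hB₂, hB₂U⟩ := hB.2 U hU hne
  obtain ⟨hB₂open, q, hq⟩ := hB.1 B₂ hB₂
  -- Separate `q` from the compact set `closure B₂ \ B₂`; a π-base member inside `O ∩ B₂` then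
  -- has its closure inside `B₂`.
  obtain ⟨O, O', hO, hO', hqO, hO'B₂, hOO'⟩ := SeparatedNhds.of_isCompact_isCompact
    isCompact_singleton ((hc B₂ hB₂).diff hB₂open) (disjoint_singleton_left.mpr fun h => h.2 hq)
  obtain ⟨B, hB, hBsub⟩ := hB.2 (O ∩ B₂) (hO.inter hB₂open) ⟨q, hqO (mem_singleton q), hq⟩
  refine ⟨B, hB, fun x hx => hB₂U ?_⟩
  have hx' := closure_mono hBsub hx
  by_contra hxB₂
  exact disjoint_left.mp (hOO'.closure_left hO') (closure_mono inter_subset_left hx')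
    (hO'B₂ ⟨closure_mono inter_subset_right hx', hxB₂⟩)

theorem IsPiBase.exists_separating_family [T2Space X] {ℬ : Set (Set X)} (hB : IsPiBase X ℬ)
    (hc : ∀ B ∈ ℬ, IsCompact (closure B)) (hw : wLdeg X ≤ κ) {𝒩 : X → Set (Set X)}
    (h𝒩y : ∀ y, ∀ T ∈ 𝒩 y, IsOpen T ∧ y ∈ T)
    (h𝒩K : ∀ y K, IsCompact K → y ∉ K → ∃ T ∈ 𝒩 y, Disjoint T K)
    {R : Set X} (hR : IsClosed R) (hRX : R ≠ Set.univ) :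
    ∃ 𝒲 ⊆ ⋃ y ∈ R, 𝒩 y, #𝒲 ≤ κ ∧ (∃ B ∈ ℬ, Disjoint B (⋃₀ 𝒲)) ∧
      ∀ B ∈ ℬ, B ⊆ R → ¬Disjoint B (⋃₀ 𝒲) := by
  obtain ⟨B₁, hB₁, hB₁R⟩ := hB.exists_closure_subset hc hR.isOpen_compl (nonempty_compl.mpr hRX)
  have hT : ∀ y : R, ∃ T ∈ 𝒩 y, Disjoint T (closure B₁) := fun y =>
    h𝒩K y _ (hc B₁ hB₁) fun h => hB₁R h y.2
  choose T hT𝒩 hTB₁ using hT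
  have hcover : IsOpenCover X (insert Rᶜ (range T)) := by
    refine ⟨forall_mem_insert.mpr ⟨hR.isOpen_compl, forall_mem_range.mpr fun y =>
      (h𝒩y y _ (hT𝒩 y)).1⟩, eq_univ_of_forall fun x => ?_⟩
    by_cases hx : x ∈ R
    · exact ⟨T ⟨x, hx⟩, mem_insert_of_mem _ (mem_range_self _), (h𝒩y x _ (hT𝒩 ⟨x, hx⟩)).2⟩
    · exact ⟨Rᶜ, mem_insert _ _, hx⟩
  obtain ⟨𝒱, h𝒱, h𝒱κ, hdense⟩ := exists_dense_sUnion_of_wLdeg_le hw hcover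
  refine ⟨𝒱 ∩ range T, ?_, (mk_le_mk_of_subset inter_subset_left).trans h𝒱κ, ⟨B₁, hB₁, ?_⟩,
    fun B hBℬ hBR hdisj => ?_⟩
  · rintro _ ⟨-, y, rfl⟩
    exact mem_biUnion y.2 (hT𝒩 y)
  · refine disjoint_sUnion_right.mpr ?_
    rintro _ ⟨-, y, rfl⟩
    exact ((hTB₁ y).mono_right subset_closure).symm
  · obtain ⟨hBo, hBne⟩ := hB.1 B hBℬ
    obtain ⟨x, hxB, V, hV𝒱, hxV⟩ := hdense.inter_open_nonempty B hBo hBne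
    rcases h𝒱 hV𝒱 with rfl | ⟨y, rfl⟩
    · exact hxV (hBR hxB)
    · exact disjoint_left.mp hdisj hxB ⟨T y, ⟨hV𝒱, y, rfl⟩, hxV⟩

theorem IsPiBase.mk_le_two_power [T2Space X] {ℬ : Set (Set X)} (hB : IsPiBase X ℬ)
    (hc : ∀ B ∈ ℬ, IsCompact (closure B)) (hψ : closedPseudoChar X ≤ κ)
    (ht : tightness X ≤ κ) (hw : wLdeg X ≤ κ) : #X ≤ 2 ^ κ := by
  have hκ : ℵ₀ ≤ κ := tightness_mem.1.trans ht
  have h2κ : ℵ₀ ≤ 2 ^ κ := hκ.trans (cantor κ).le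
  choose 𝒩 h𝒩κ h𝒩y h𝒩K using exists_local_family_disjoint_of_closedPseudoChar_le hψ
  have hR : ∀ 𝒞 ⊆ ℬ, #𝒞 ≤ 2 ^ κ → #(closure (⋃₀ 𝒞)) ≤ 2 ^ κ := fun 𝒞 h𝒞ℬ h𝒞 =>
    mk_closure_le_two_power ht hψ <| mk_sUnion_le_of_mk_le h2κ h𝒞 fun B hB =>
      (mk_le_mk_of_subset subset_closure).trans ((hc B (h𝒞ℬ hB)).mk_le_two_power ht hψ)
  set Q : Set (Set X) → Set (Set X) := fun 𝒲 => {B ∈ ℬ | Disjoint B (⋃₀ 𝒲)}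
  obtain ⟨𝒜, h𝒜ℬ, h𝒜κ, h𝒜⟩ := exists_closed_under_of_mk_le hκ ℬ
    (fun 𝒞 𝒮 => ∀ 𝒲 ⊆ ⋃ y ∈ closure (⋃₀ 𝒞), 𝒩 y, #𝒲 ≤ κ → (Q 𝒲).Nonempty →
      (𝒮 ∩ Q 𝒲).Nonempty)
    (fun _ _ _ h𝒮𝒯 h 𝒲 h𝒲 h𝒲κ hQ => (h 𝒲 h𝒲 h𝒲κ hQ).mono (inter_subset_inter_left _ h𝒮𝒯))
    fun 𝒞 h𝒞ℬ h𝒞κ => by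
      obtain ⟨𝒮, h𝒮κ, h𝒮⟩ := exists_mk_le_two_power_inter_nonempty hκ
        (mk_biUnion_le_of_mk_le h2κ (hR 𝒞 h𝒞ℬ (h𝒞κ.trans (cantor κ).le))
          fun y _ => (h𝒩κ y).trans (cantor κ).le) Q
      exact ⟨𝒮 ∩ ℬ, inter_subset_right, (mk_le_mk_of_subset inter_subset_left).trans h𝒮κ,
        fun 𝒲 h𝒲 h𝒲κ hQ => (h𝒮 𝒲 h𝒲 h𝒲κ hQ).mono fun B hB => ⟨⟨hB.1, hB.2.1⟩, hB.2⟩⟩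
  suffices closure (⋃₀ 𝒜) = Set.univ by
    rw [← mk_univ, ← this]
    exact hR 𝒜 h𝒜ℬ h𝒜κ
  by_contra hRX
  obtain ⟨𝒲, h𝒲R, h𝒲κ, hQ, h𝒲⟩ :=
    hB.exists_separating_family hc hw h𝒩y h𝒩K isClosed_closure hRX
  have hy : ∀ W : 𝒲, ∃ y ∈ closure (⋃₀ 𝒜), W.1 ∈ 𝒩 y := fun W => by simpa using h𝒲R W.2
  choose y hyR hWy using hy
  obtain ⟨𝒞, h𝒞𝒜, h𝒞κ, hy𝒞⟩ :=
    exists_subset_mk_le_subset_closure_sUnion ht (range_subset_iff.mpr hyR) (mk_range_le.trans h𝒲κ)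
  obtain ⟨B, hB𝒜, hBℬ, hBdisj⟩ := h𝒜 𝒞 h𝒞𝒜 h𝒞κ 𝒲
    (fun W hW => mem_biUnion (hy𝒞 (mem_range_self ⟨W, hW⟩)) (hWy ⟨W, hW⟩)) h𝒲κ hQ
  exact h𝒲 B hBℬ ((subset_sUnion_of_mem hB𝒜).trans subset_closure) hBdisj

end Topology

theorem stmt17 (X : Type u) [TopologicalSpace X] [T2Space X] (ℬ : Set (Set X))
    (hB : IsPiBase X ℬ) (hc : ∀ B ∈ ℬ, IsCompact (closure B)) :
    #X ≤ 2 ^ (closedPseudoChar X * tightness X * wLdeg X) := by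
  have one_le : ∀ {c : Cardinal.{u}}, ℵ₀ ≤ c → 1 ≤ c := fun h => one_le_aleph0.trans h
  have hψ := one_le (closedPseudoChar_mem (X := X)).1
  have ht := one_le (tightness_mem (X := X)).1
  have hw := one_le (wLdeg_mem (X := X)).1
  refine hB.mk_le_two_power hc ?_ ?_ ?_
  · exact le_mul_of_one_le_right' hw |>.trans' (le_mul_of_one_le_right' ht)
  · exact (le_mul_of_one_le_left' hψ).trans (le_mul_of_one_le_right' hw)
  · exact le_mul_of_one_le_left' (one_le_mul hψ ht)
end

section
/- If X is a Hausdorff space with a π-base whose elements have compact closures, then d(X) = d_θ(X). -/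
open Cardinal Set

universe u

lemma thetaDense_iff_dense (X : Type u) [TopologicalSpace X] [T2Space X] (ℬ : Set (Set X))
    (hB : IsPiBase X ℬ) (hc : ∀ B ∈ ℬ, IsCompact (closure B)) (D : Set X) :
    thetaClosure X D = Set.univ ↔ Dense D := by
  constructor
  · intro hD
    rw [dense_iff_inter_open]
    intro U hU hUne
    obtain ⟨B, hBmem, hBU⟩ := hB.2 U hU hUne
    obtain ⟨hBopen, x, hxB⟩ := hB.1 B hBmem
    have hK : IsCompact (closure B) := hc B hBmem
    have ht : IsCompact (closure B \ B) := hK.diff hBopen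
    have hxt : x ∉ closure B \ B := fun h => h.2 hxB
    obtain ⟨U', W, hU'o, hWo, htU', hxW, hdisj⟩ := ht.separation_of_notMem hxt
    set V := W ∩ B with hV
    have hVo : IsOpen V := hWo.inter hBopen
    have hxV : x ∈ V := ⟨hxW, hxB⟩
    have hclV : closure V ⊆ U := by
      intro y hy
      have hyK : y ∈ closure B := closure_mono Set.inter_subset_right hy
      have hyW : y ∈ closure W := closure_mono Set.inter_subset_left hy
      have hyU' : y ∉ U' := by
        intro hyU'
        have : closure W ⊆ U'ᶜ := closure_minimal
          (fun z hz hz' => Set.disjoint_left.mp hdisj hz' hz) hU'o.isClosed_compl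
        exact this hyW hyU'
      have : y ∈ B := by
        by_contra hyB
        exact hyU' (htU' ⟨hyK, hyB⟩)
      exact hBU this
    have := (Set.eq_univ_iff_forall.mp hD x) V hVo hxV
    obtain ⟨z, hz1, hz2⟩ := this
    exact ⟨z, hclV hz1, hz2⟩
  · intro hD
    apply Set.eq_univ_of_forall
    intro x U hUo hxU
    obtain ⟨z, hz1, hz2⟩ := hD.inter_open_nonempty U hUo ⟨x, hxU⟩
    exact ⟨z, subset_closure hz1, hz2⟩

theorem stmt18 (X : Type u) [TopologicalSpace X] [T2Space X] (ℬ : Set (Set X))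
    (hB : IsPiBase X ℬ) (hc : ∀ B ∈ ℬ, IsCompact (closure B)) :
    densityCard X = thetaDensityCard X := by
  unfold densityCard thetaDensityCard
  congr 1
  ext κ
  simp only [Set.mem_setOf_eq, thetaDense_iff_dense X ℬ hB hc]
end
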